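/- arXiv:math/0403443 — 4 statements merged into one kernel-verified Lean document; each statement's English description precedes it below -/
import Mathlib

section
/- Let A be a unital subalgebra of continuous functions on a compact space 𝒳 (the closed unit ball of a complex Banach space E), containing the restrictions of bounded linear functionals of norm ≤ 1, and let x ∈ 𝒳 be nonzero with d = ‖x‖_E. If f is a function on 𝒳 of the form f(y) = p(ℓ₁(y), …, ℓ_m(y)) for a polynomial p and norm-one functionals ℓᵢ, with sup_{𝒳} |f| ≤ 1, then |f(x) − f(0)| ≤ 2d. -/
/-! Restricted to the complex line through `x`, `f` is a holomorphic function of one variable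
whose oscillation on the unit disc is at most `2`, so the Schwarz lemma bounds `|f(x) - f(0)|`
by `2‖x‖`; on the unit sphere the bound `2` is just the triangle inequality. -/

open Metric Set

theorem norm_sub_apply_zero_le_two_mul_mul_norm {E F : Type*} [NormedAddCommGroup E] [NormedSpace ℂ E]
    [NormedAddCommGroup F] [NormedSpace ℂ F] {f : E → F} {M : ℝ}
    (hd : DifferentiableOn ℂ f (ball 0 1)) (hbound : ∀ y : E, ‖y‖ ≤ 1 → ‖f y‖ ≤ M)
    {x : E} (hx : ‖x‖ ≤ 1) :
    ‖f x - f 0‖ ≤ 2 * M * ‖x‖ := by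
  have hosc : ∀ y : E, ‖y‖ ≤ 1 → ‖f y - f 0‖ ≤ 2 * M := fun y hy =>
    calc ‖f y - f 0‖ ≤ ‖f y‖ + ‖f 0‖ := norm_sub_le _ _
      _ ≤ M + M := add_le_add (hbound y hy) (hbound 0 (by simp))
      _ = 2 * M := by ring
  rcases hx.lt_or_eq with hlt | heq
  · have hmaps : MapsTo f (ball 0 1) (closedBall (f 0) (2 * M)) := fun y hy => by
      rw [mem_closedBall, dist_eq_norm]
      exact hosc y (mem_ball_zero_iff.mp hy).le
    simpa [dist_eq_norm] using
      Complex.dist_le_div_mul_dist_of_mapsTo_ball hd hmaps (mem_ball_zero_iff.mpr hlt)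
  · simpa [heq] using hosc x hx

theorem stmt_4_general {E : Type*} [NormedAddCommGroup E] [NormedSpace ℂ E]
    (m : ℕ) (p : MvPolynomial (Fin m) ℂ) (l : Fin m → (E →L[ℂ] ℂ))
    (f : E → ℂ) (hf : ∀ y, f y = MvPolynomial.eval (fun i => l i y) p)
    (hbound : ∀ y : E, ‖y‖ ≤ 1 → ‖f y‖ ≤ 1)
    (x : E) (hxball : ‖x‖ ≤ 1) :
    ‖f x - f 0‖ ≤ 2 * ‖x‖ := by
  have hd : DifferentiableOn ℂ f (ball 0 1) := by
    rw [funext hf]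
    exact (AnalyticOnNhd.eval_continuousLinearMap' l p).differentiableOn.mono (subset_univ _)
  simpa using norm_sub_apply_zero_le_two_mul_mul_norm hd hbound hxball

/-- Schwarz-lemma estimate for the Gleason distance: if `f` is a polynomial in finitely many
norm-one continuous linear functionals on a complex Banach space `E`, bounded by `1` on the
closed unit ball, and `x` is a nonzero point of the closed unit ball, then
`|f(x) - f(0)| ≤ 2‖x‖`. -/
theorem stmt_4 {E : Type*} [NormedAddCommGroup E] [NormedSpace ℂ E]
    (m : ℕ) (p : MvPolynomial (Fin m) ℂ) (l : Fin m → (E →L[ℂ] ℂ))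
    (hl : ∀ i, ‖l i‖ = 1)
    (f : E → ℂ) (hf : ∀ y, f y = MvPolynomial.eval (fun i => l i y) p)
    (hbound : ∀ y : E, ‖y‖ ≤ 1 → ‖f y‖ ≤ 1)
    (x : E) (hx : x ≠ 0) (hxball : ‖x‖ ≤ 1) :
    ‖f x - f 0‖ ≤ 2 * ‖x‖ :=
  stmt_4_general m p l f hf hbound x hxball
end

section
/- Let φ : [0,1] → [0,1] be continuously differentiable with a unique fixed point x₀, and suppose the iterates converge: ⋂_n φ_n([0,1]) = {x₀} and φ'(x₀) = 0. Then for every ε > 0 there exists N such that for all n > N and all t ∈ [0,1], |φ_n'(t)| ≤ ‖φ'‖_∞^N · ε^{n−N}; in particular ‖φ_n'‖_∞^{1/n} → 0 as n → ∞. -/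
/-!
By the chain rule, `(φ^[n])'(t) = ∏_{k<n} φ'(φ^[k] t)`. The compact sets `φ^[n] '' [0,1]` decrease
to `{x₀}`, so they eventually lie in any neighbourhood of `x₀`, in particular in one where
`|φ'| < ε`: all but the first `N` factors are then at most `ε`, the others at most `‖φ'‖_∞`.
Taking `n`-th roots, `‖(φ^[n])'‖_∞^(1/n) ≤ C^(1/n) ε → ε` for a constant `C` depending on `ε`.
-/

open Set Filter Topology

theorem Finset.prod_range_le_pow_mul_pow {R : Type*} [CommSemiring R] [PartialOrder R]
    [IsOrderedRing R] {a : ℕ → R} {M ε : R} {N n : ℕ} (ha : ∀ k, 0 ≤ a k) (hM : ∀ k, a k ≤ M)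
    (hε : ∀ k ≥ N, a k ≤ ε) (hn : N ≤ n) :
    ∏ k ∈ Finset.range n, a k ≤ M ^ N * ε ^ (n - N) := by
  rw [← Nat.add_sub_cancel' hn, Finset.prod_range_add, Nat.add_sub_cancel_left]
  have hMN : ∏ k ∈ Finset.range N, a k ≤ M ^ N :=
    (Finset.prod_le_prod (fun k _ => ha k) fun k _ => hM k).trans_eq (by simp)
  have hεn : ∏ k ∈ Finset.range (n - N), a (N + k) ≤ ε ^ (n - N) :=
    (Finset.prod_le_prod (fun k _ => ha _) fun k _ => hε _ (N.le_add_right k)).trans_eq (by simp)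
  exact mul_le_mul hMN hεn (Finset.prod_nonneg fun k _ => ha _)
    ((Finset.prod_nonneg fun k _ => ha k).trans hMN)

theorem tendsto_rpow_one_div_nhds_zero_of_le_mul_pow {a : ℕ → ℝ} (ha : ∀ n, 0 ≤ a n)
    (h : ∀ ε > 0, ∃ C, ∀ᶠ n in atTop, a n ≤ C * ε ^ n) :
    Tendsto (fun n : ℕ => a n ^ ((1 : ℝ) / n)) atTop (𝓝 0) := by
  refine tendsto_order.2
    ⟨fun b hb => .of_forall fun n => hb.trans_le (by have := ha n; positivity), fun b hb => ?_⟩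
  obtain ⟨C, hC⟩ := h (b / 2) (half_pos hb)
  set C' := max C 1
  have hC' : 0 < C' := zero_lt_one.trans_le (le_max_right _ _)
  have hlim : Tendsto (fun n : ℕ => C' ^ ((1 : ℝ) / n) * (b / 2)) atTop (𝓝 (b / 2)) := by
    simpa using (tendsto_const_nhds.rpow tendsto_one_div_atTop_nhds_zero_nat
      (Or.inl hC'.ne')).mul_const (b / 2)
  filter_upwards [hC, hlim.eventually_lt_const (half_lt_self hb), eventually_ne_atTop 0]
    with n hn hlt hn0
  calc a n ^ ((1 : ℝ) / n) ≤ (C' * (b / 2) ^ n) ^ ((1 : ℝ) / n) := by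
        gcongr
        · exact ha n
        · exact hn.trans (by gcongr; exact le_max_left _ _)
    _ = C' ^ ((1 : ℝ) / n) * (b / 2) := by
        rw [Real.mul_rpow hC'.le (by positivity), ← Real.rpow_natCast,
          ← Real.rpow_mul (by positivity), mul_one_div_cancel (by exact_mod_cast hn0),
          Real.rpow_one]
    _ < b := hlt

theorem eventually_mapsTo_iterate_of_iInter_image_eq {X : Type*} [TopologicalSpace X] [T2Space X]
    {f : X → X} {s : Set X} {x₀ : X} (hs : IsCompact s) (hf : ContinuousOn f s)
    (hmaps : MapsTo f s s) (hinter : ⋂ n : ℕ, f^[n] '' s = {x₀}) {U : Set X} (hU : U ∈ 𝓝[s] x₀) :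
    ∀ᶠ n in atTop, MapsTo f^[n] s U := by
  obtain ⟨V, hV, hVU⟩ := mem_nhdsWithin_iff_exists_mem_nhds_inter.1 hU
  have hanti : Antitone fun n : ℕ => f^[n] '' s := antitone_nat_of_succ_le fun n => by
    rw [Function.iterate_succ, image_comp]
    exact image_mono hmaps.image_subset
  obtain ⟨N, hN⟩ := exists_subset_nhds_of_isCompact hanti.directed_ge
    (fun n => hs.image_of_continuousOn (hf.iterate hmaps n)) (by simpa [hinter] using hV)
  filter_upwards [eventually_ge_atTop N] with n hn t ht
  exact hVU ⟨hN (hanti hn (mem_image_of_mem _ ht)), hmaps.iterate n ht⟩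

theorem hasDerivWithinAt_iterate_prod {𝕜 : Type*} [NontriviallyNormedField 𝕜] {f : 𝕜 → 𝕜}
    {s : Set 𝕜} (hf : DifferentiableOn 𝕜 f s) (hmaps : MapsTo f s s) {t : 𝕜} (ht : t ∈ s)
    (n : ℕ) : HasDerivWithinAt f^[n] (∏ k ∈ Finset.range n, derivWithin f s (f^[k] t)) s t := by
  induction n with
  | zero => simpa using hasDerivWithinAt_id t s
  | succ n ih =>
    rw [Function.iterate_succ', Finset.prod_range_succ, mul_comm]
    exact (hf _ (hmaps.iterate n ht)).hasDerivWithinAt.comp t ih (hmaps.iterate n)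

theorem abs_derivWithin_iterate_le {f : ℝ → ℝ} {s : Set ℝ} {x₀ : ℝ} (hs : IsCompact s)
    (hsd : UniqueDiffOn ℝ s) (hmaps : MapsTo f s s) (hf : ContDiffOn ℝ 1 f s) (hx₀ : x₀ ∈ s)
    (hinter : ⋂ n : ℕ, f^[n] '' s = {x₀}) (hder : derivWithin f s x₀ = 0) {ε : ℝ} (hε : 0 < ε) :
    ∃ N : ℕ, ∀ n > N, ∀ t ∈ s,
      |derivWithin f^[n] s t| ≤ (⨆ y : s, |derivWithin f s y|) ^ N * ε ^ (n - N) := by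
  have hd : ContinuousOn (derivWithin f s) s := hf.continuousOn_derivWithin hsd le_rfl
  have hM : ∀ y ∈ s, |derivWithin f s y| ≤ ⨆ y : s, |derivWithin f s y| := fun y hy =>
    le_ciSup (by simpa only [image_eq_range] using hs.bddAbove_image hd.abs) (⟨y, hy⟩ : s)
  have hU : {y | |derivWithin f s y| < ε} ∈ 𝓝[s] x₀ :=
    (hd x₀ hx₀).abs.eventually_lt_const (by simpa [hder] using hε)
  obtain ⟨N, hN⟩ := eventually_atTop.1 <| eventually_mapsTo_iterate_of_iInter_image_eq hs
    hf.continuousOn hmaps hinter hU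
  refine ⟨N, fun n hn t ht => ?_⟩
  rw [((hasDerivWithinAt_iterate_prod (hf.differentiableOn one_ne_zero) hmaps ht n).derivWithin
    (hsd t ht)), Finset.abs_prod]
  exact Finset.prod_range_le_pow_mul_pow (fun k => abs_nonneg _)
    (fun k => hM _ (hmaps.iterate k ht)) (fun k hk => (hN k hk ht).le) hn.le

theorem stmt_7_general (φ : ℝ → ℝ)
    (hmaps : MapsTo φ (Icc (0:ℝ) 1) (Icc (0:ℝ) 1))
    (hφ : ContDiffOn ℝ 1 φ (Icc (0:ℝ) 1))
    (x₀ : ℝ) (hx₀ : x₀ ∈ Icc (0:ℝ) 1)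
    (hinter : (⋂ n : ℕ, φ^[n] '' Icc (0:ℝ) 1) = {x₀})
    (hder : derivWithin φ (Icc (0:ℝ) 1) x₀ = 0) :
    (∀ ε : ℝ, 0 < ε → ∃ N : ℕ, ∀ n > N, ∀ t ∈ Icc (0:ℝ) 1,
      |derivWithin (φ^[n]) (Icc (0:ℝ) 1) t| ≤
        (⨆ s : Icc (0:ℝ) 1, |derivWithin φ (Icc (0:ℝ) 1) (s : ℝ)|) ^ N * ε ^ (n - N)) ∧
    Tendsto (fun n : ℕ =>
        (⨆ t : Icc (0:ℝ) 1, |derivWithin (φ^[n]) (Icc (0:ℝ) 1) (t : ℝ)|) ^ ((1 : ℝ) / n))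
      atTop (nhds 0) := by
  have hbound := fun ε (hε : 0 < ε) => abs_derivWithin_iterate_le isCompact_Icc
    (uniqueDiffOn_Icc zero_lt_one) hmaps hφ hx₀ hinter hder hε
  refine ⟨hbound, tendsto_rpow_one_div_nhds_zero_of_le_mul_pow
    (fun n => Real.iSup_nonneg fun _ => abs_nonneg _) fun ε hε => ?_⟩
  obtain ⟨N, hN⟩ := hbound ε hε
  refine ⟨(⨆ s : Icc (0:ℝ) 1, |derivWithin φ (Icc (0:ℝ) 1) (s : ℝ)|) ^ N / ε ^ N, ?_⟩
  filter_upwards [eventually_gt_atTop N] with n hn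
  refine ciSup_le fun t => (hN n hn t t.2).trans_eq ?_
  rw [pow_sub₀ _ hε.ne' hn.le]
  ring

/-- If `φ : [0,1] → [0,1]` is `C¹` with a unique fixed point `x₀`, the iterates converge
(`⋂_n φ_n([0,1]) = {x₀}`), and `φ'(x₀) = 0`, then for every `ε > 0` there is `N` such that
`|φ_n'(t)| ≤ ‖φ'‖_∞^N · ε^(n-N)` for all `n > N`, `t ∈ [0,1]`; in particular
`‖φ_n'‖_∞^(1/n) → 0`. Derivatives are taken within `[0,1]`. -/
theorem stmt_7 (φ : ℝ → ℝ)
    (hmaps : MapsTo φ (Icc (0:ℝ) 1) (Icc (0:ℝ) 1))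
    (hφ : ContDiffOn ℝ 1 φ (Icc (0:ℝ) 1))
    (x₀ : ℝ) (hx₀ : x₀ ∈ Icc (0:ℝ) 1) (hfix : φ x₀ = x₀)
    (huniq : ∀ y ∈ Icc (0:ℝ) 1, φ y = y → y = x₀)
    (hinter : (⋂ n : ℕ, φ^[n] '' Icc (0:ℝ) 1) = {x₀})
    (hder : derivWithin φ (Icc (0:ℝ) 1) x₀ = 0) :
    (∀ ε : ℝ, 0 < ε → ∃ N : ℕ, ∀ n > N, ∀ t ∈ Icc (0:ℝ) 1,
      |derivWithin (φ^[n]) (Icc (0:ℝ) 1) t| ≤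
        (⨆ s : Icc (0:ℝ) 1, |derivWithin φ (Icc (0:ℝ) 1) (s : ℝ)|) ^ N * ε ^ (n - N)) ∧
    Tendsto (fun n : ℕ =>
        (⨆ t : Icc (0:ℝ) 1, |derivWithin (φ^[n]) (Icc (0:ℝ) 1) (t : ℝ)|) ^ ((1 : ℝ) / n))
      atTop (nhds 0) :=
  stmt_7_general φ hmaps hφ x₀ hx₀ hinter hder
end

section
/- Let φ(x) = x²/2 on [0,1]. Then φ maps [0,1] into itself, ⋂_{n=0}^∞ φ_n([0,1]) = {0}, φ'(0) = 0, and moreover the composition operator T on C¹[0,1] given by Tf = f∘φ satisfies lim_n ‖T^n − L‖^{1/n} = 0 where Lf = f(0)·1, while T^n is not of the form f ↦ f(c)·1 for any n and c. -/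
open Set Filter Topology

/-! The iterates of `φ x = x ^ 2 / 2` have the closed form `φₙ x = 2 (x / 2) ^ 2ⁿ`, so on `[0, 1]`
both `φₙ` and `φₙ'` are at most `2ⁿ⁺¹ 2^(-2ⁿ)`. Since `(Tⁿ - L) f = f ∘ φₙ - f 0`, the mean value
theorem and the chain rule bound `‖(Tⁿ - L) f‖` by `2 · 2ⁿ⁺¹ 2^(-2ⁿ) ‖f'‖_∞`, and the `n`-th root of
this superexponentially small bound tends to `0`. No `Tⁿ` is a point evaluation, because `Tⁿ`
sends the identity to `φₙ`, which is not constant. -/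

lemma eventually_mul_le_two_pow (k : ℕ) : ∀ᶠ n : ℕ in atTop, k * n ≤ 2 ^ n := by
  have := (isLittleO_pow_const_const_pow_of_one_lt (R := ℝ) 1 one_lt_two).bound
    (c := 1 / (k + 1)) (by positivity)
  filter_upwards [this] with n hn
  simp only [pow_one, Real.norm_natCast, norm_pow, Real.norm_ofNat] at hn
  rw [div_mul_eq_mul_div, le_div_iff₀ (by positivity)] at hn
  exact_mod_cast (by nlinarith : (k : ℝ) * n ≤ 2 ^ n)

lemma tendsto_rpow_one_div_zero_of_eventually_le_pow {a : ℕ → ℝ} (ha : ∀ n, 0 ≤ a n)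
    (h : ∀ ε > 0, ∀ᶠ n in atTop, a n ≤ ε ^ n) :
    Tendsto (fun n : ℕ => a n ^ ((1 : ℝ) / n)) atTop (𝓝 0) := by
  refine tendsto_order.2 ⟨fun b hb => Eventually.of_forall fun n => ?_, fun ε hε => ?_⟩
  · exact hb.trans_le (Real.rpow_nonneg (ha n) _)
  · obtain ⟨δ, hδ0, hδε⟩ := exists_between hε
    filter_upwards [h δ hδ0, eventually_ge_atTop 1] with n hn hn1
    calc a n ^ ((1 : ℝ) / n) ≤ (δ ^ n) ^ ((1 : ℝ) / n) :=
          Real.rpow_le_rpow (ha n) hn (by positivity)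
      _ = δ := by
          rw [← Real.rpow_natCast, ← Real.rpow_mul hδ0.le, mul_one_div_cancel (by positivity),
            Real.rpow_one]
      _ < ε := hδε

lemma eventually_two_pow_mul_half_pow_two_pow_le {ε : ℝ} (hε : 0 < ε) :
    ∀ᶠ n : ℕ in atTop, 2 ^ (n + 2) * (1 / 2 : ℝ) ^ 2 ^ n ≤ ε ^ n := by
  obtain ⟨k, hk⟩ := exists_pow_lt_of_lt_one hε (by norm_num : (1 / 2 : ℝ) < 1)
  filter_upwards [eventually_mul_le_two_pow (k + 3), eventually_ge_atTop 1] with n hn hn1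
  calc 2 ^ (n + 2) * (1 / 2 : ℝ) ^ 2 ^ n ≤ 2 ^ (n + 2) * (1 / 2) ^ (k * n + (n + 2)) := by
        refine mul_le_mul_of_nonneg_left ?_ (by positivity)
        exact pow_le_pow_of_le_one (by norm_num : (0 : ℝ) ≤ 1 / 2) (by norm_num) (by nlinarith)
    _ = ((1 / 2) ^ k) ^ n := by
        rw [pow_add (1 / 2 : ℝ), mul_left_comm, ← mul_pow, pow_mul]; norm_num
    _ ≤ ε ^ n := by gcongr

noncomputable def halfSq (x : ℝ) : ℝ := x ^ 2 / 2

lemma mapsTo_halfSq : MapsTo halfSq (Icc 0 1) (Icc 0 1) := fun x ⟨h0, h1⟩ =>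
  ⟨by unfold halfSq; positivity, by unfold halfSq; nlinarith⟩

lemma halfSq_iterate (n : ℕ) (x : ℝ) : halfSq^[n] x = 2 * (x / 2) ^ 2 ^ n := by
  induction n with
  | zero => rw [Function.iterate_zero_apply, pow_zero, pow_one]; ring
  | succ n ih => rw [Function.iterate_succ_apply', ih, halfSq, pow_succ 2 n, pow_mul]; ring

lemma hasDerivAt_halfSq_iterate (n : ℕ) (x : ℝ) :
    HasDerivAt halfSq^[n] (2 ^ n * (x / 2) ^ (2 ^ n - 1)) x := by
  rw [show halfSq^[n] = fun x => 2 * (x / 2) ^ 2 ^ n from funext (halfSq_iterate n)]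
  refine ((((hasDerivAt_id' x).div_const 2).fun_pow (2 ^ n)).const_mul 2).congr_deriv ?_
  push_cast
  ring

lemma deriv_halfSq_zero : deriv halfSq 0 = 0 := by
  simpa using (hasDerivAt_halfSq_iterate 1 0).deriv

lemma halfSq_iterate_le {x : ℝ} (hx : x ∈ Icc 0 1) (n : ℕ) :
    halfSq^[n] x ≤ 2 * (1 / 2) ^ 2 ^ n := by
  rw [halfSq_iterate]
  gcongr
  · linarith [hx.1]
  · linarith [hx.2]

lemma iInter_image_halfSq_iterate : ⋂ n : ℕ, halfSq^[n] '' Icc 0 1 = {0} := by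
  refine subset_antisymm (fun y hy => ?_) (fun y hy => ?_)
  · have hbound : ∀ n : ℕ, y ∈ Icc 0 (2 * (1 / 2 : ℝ) ^ 2 ^ n) := fun n => by
      obtain ⟨x, hx, rfl⟩ := mem_iInter.mp hy n
      exact ⟨(mapsTo_halfSq.iterate n hx).1, halfSq_iterate_le hx n⟩
    have hlim : Tendsto (fun n : ℕ => 2 * (1 / 2 : ℝ) ^ 2 ^ n) atTop (𝓝 0) := by
      have hhalf := tendsto_pow_atTop_nhds_zero_of_lt_one (by norm_num : (0 : ℝ) ≤ 1 / 2)
        (by norm_num)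
      simpa using (hhalf.comp (tendsto_pow_atTop_atTop_of_one_lt one_lt_two)).const_mul (2 : ℝ)
    exact le_antisymm (ge_of_tendsto' hlim fun n => (hbound n).2) (hbound 0).1
  · rw [mem_singleton_iff.mp hy]
    exact mem_iInter.mpr fun n => ⟨0, left_mem_Icc.mpr zero_le_one, by simp [halfSq_iterate]⟩

lemma abs_halfSq_iterate_le {x : ℝ} (hx : x ∈ Icc 0 1) (n : ℕ) :
    |halfSq^[n] x| ≤ 2 ^ (n + 1) * (1 / 2) ^ 2 ^ n := by
  rw [abs_of_nonneg (mapsTo_halfSq.iterate n hx).1]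
  refine (halfSq_iterate_le hx n).trans (mul_le_mul_of_nonneg_right ?_ (by positivity))
  exact le_self_pow₀ one_le_two (Nat.succ_ne_zero n)

lemma abs_deriv_halfSq_iterate_le {x : ℝ} (hx : x ∈ Icc 0 1) (n : ℕ) :
    |2 ^ n * (x / 2) ^ (2 ^ n - 1)| ≤ 2 ^ (n + 1) * (1 / 2) ^ 2 ^ n := by
  have hx2 : 0 ≤ x / 2 := by linarith [hx.1]
  rw [abs_of_nonneg (by positivity)]
  calc 2 ^ n * (x / 2) ^ (2 ^ n - 1) ≤ 2 ^ n * (1 / 2) ^ (2 ^ n - 1) := by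
        gcongr
        linarith [hx.2]
    _ = 2 ^ (n + 1) * (1 / 2) ^ 2 ^ n := by
        rw [← pow_sub_one_mul (pow_ne_zero n two_ne_zero) (1 / 2 : ℝ), pow_succ]
        ring

section C1Realization

variable {B : Type*}

lemma abs_derivWithin_le_norm [Norm B] {ι : B → ℝ → ℝ}
    (hnorm : ∀ f : B, ‖f‖ = (⨆ x : Icc (0:ℝ) 1, |ι f x|) +
      ⨆ x : Icc (0:ℝ) 1, |derivWithin (ι f) (Icc 0 1) x|)
    {f : B} (hf : ContDiffOn ℝ 1 (ι f) (Icc 0 1)) {y : ℝ} (hy : y ∈ Icc 0 1) :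
    |derivWithin (ι f) (Icc 0 1) y| ≤ ‖f‖ := by
  obtain ⟨C, hC⟩ := isCompact_Icc.exists_bound_of_continuousOn
    (hf.continuousOn_derivWithin (uniqueDiffOn_Icc zero_lt_one) le_rfl)
  have hbdd : BddAbove (range fun x : Icc (0:ℝ) 1 => |derivWithin (ι f) (Icc 0 1) x|) :=
    ⟨C, by rintro _ ⟨x, rfl⟩; exact hC x x.2⟩
  rw [hnorm f]
  linarith [le_ciSup hbdd ⟨y, hy⟩, Real.iSup_nonneg fun x : Icc (0:ℝ) 1 => abs_nonneg (ι f x)]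

lemma norm_le_of_forall_abs_le [Norm B] {ι : B → ℝ → ℝ}
    (hnorm : ∀ f : B, ‖f‖ = (⨆ x : Icc (0:ℝ) 1, |ι f x|) +
      ⨆ x : Icc (0:ℝ) 1, |derivWithin (ι f) (Icc 0 1) x|)
    {g : B} {a b : ℝ} (ha : ∀ x ∈ Icc (0:ℝ) 1, |ι g x| ≤ a)
    (hb : ∀ x ∈ Icc (0:ℝ) 1, |derivWithin (ι g) (Icc 0 1) x| ≤ b) :
    ‖g‖ ≤ a + b := by
  have : Nonempty (Icc (0:ℝ) 1) := nonempty_Icc_subtype zero_le_one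
  rw [hnorm g]
  exact add_le_add (ciSup_le fun x => ha x x.2) (ciSup_le fun x => hb x x.2)

lemma norm_le_of_apply_eq_comp_sub [Norm B] {ι : B → ℝ → ℝ}
    (hnorm : ∀ f : B, ‖f‖ = (⨆ x : Icc (0:ℝ) 1, |ι f x|) +
      ⨆ x : Icc (0:ℝ) 1, |derivWithin (ι f) (Icc 0 1) x|)
    {f g : B} (hf : ContDiffOn ℝ 1 (ι f) (Icc 0 1)) {ψ ψ' : ℝ → ℝ} {δ : ℝ}
    (hψ : MapsTo ψ (Icc 0 1) (Icc 0 1))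
    (hψ' : ∀ x ∈ Icc (0:ℝ) 1, HasDerivWithinAt ψ (ψ' x) (Icc 0 1) x)
    (hδ : ∀ x ∈ Icc (0:ℝ) 1, |ψ x| ≤ δ ∧ |ψ' x| ≤ δ)
    (hg : ∀ x ∈ Icc (0:ℝ) 1, ι g x = ι f (ψ x) - ι f 0) :
    ‖g‖ ≤ 2 * δ * ‖f‖ := by
  have hfd : DifferentiableOn ℝ (ι f) (Icc 0 1) := hf.differentiableOn one_ne_zero
  have hf' : ∀ y ∈ Icc (0:ℝ) 1, |derivWithin (ι f) (Icc 0 1) y| ≤ ‖f‖ :=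
    fun y hy => abs_derivWithin_le_norm hnorm hf hy
  have hf_nonneg : 0 ≤ ‖f‖ := (abs_nonneg _).trans (hf' 0 (left_mem_Icc.mpr zero_le_one))
  refine (norm_le_of_forall_abs_le hnorm (a := δ * ‖f‖) (b := δ * ‖f‖) ?_ ?_).trans_eq (by ring)
  · intro x hx
    have hmvt := (convex_Icc (0:ℝ) 1).norm_image_sub_le_of_norm_derivWithin_le hfd hf'
      (left_mem_Icc.mpr zero_le_one) (hψ hx)
    rw [Real.norm_eq_abs, Real.norm_eq_abs, sub_zero] at hmvt
    rw [hg x hx, mul_comm]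
    exact hmvt.trans (mul_le_mul_of_nonneg_left (hδ x hx).1 hf_nonneg)
  · intro x hx
    have hcomp : HasDerivWithinAt (fun y => ι f (ψ y) - ι f 0)
        (derivWithin (ι f) (Icc 0 1) (ψ x) * ψ' x) (Icc 0 1) x :=
      (((hfd _ (hψ hx)).hasDerivWithinAt).comp x (hψ' x hx) hψ).sub_const _
    rw [derivWithin_congr hg (hg x hx), hcomp.derivWithin (uniqueDiffOn_Icc zero_lt_one x hx),
      abs_mul, mul_comm]
    exact mul_le_mul (hδ x hx).2 (hf' _ (hψ hx)) (abs_nonneg _) ((abs_nonneg _).trans (hδ x hx).2)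

lemma pow_apply_eq_comp_iterate [TopologicalSpace B] [AddCommMonoid B] [Module ℝ B]
    {α β : Type*}
    (ι : B → α → β) {s : Set α} {φ : α → α} (hφ : MapsTo φ s s) (T : B →L[ℝ] B)
    (hT : ∀ f : B, ∀ x ∈ s, ι (T f) x = ι f (φ x)) (n : ℕ) :
    ∀ f : B, ∀ x ∈ s, ι ((T ^ n) f) x = ι f (φ^[n] x) := by
  induction n with
  | zero => simp
  | succ n ih =>
    intro f x hx
    rw [pow_succ, mul_apply_eq_comp, ih (T f) x hx, hT f _ (hφ.iterate n hx),
      Function.iterate_succ_apply']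

lemma norm_pow_sub_le [NormedAddCommGroup B] [NormedSpace ℝ B] {ι : B →ₗ[ℝ] (ℝ → ℝ)}
    (hnorm : ∀ f : B, ‖f‖ = (⨆ x : Icc (0:ℝ) 1, |ι f x|) +
      ⨆ x : Icc (0:ℝ) 1, |derivWithin (ι f) (Icc 0 1) x|)
    (hC1 : ∀ f : B, ContDiffOn ℝ 1 (ι f) (Icc 0 1)) {T L : B →L[ℝ] B}
    (hT : ∀ f : B, ∀ x ∈ Icc (0:ℝ) 1, ι (T f) x = ι f (halfSq x))
    (hL : ∀ f : B, ∀ x ∈ Icc (0:ℝ) 1, ι (L f) x = ι f 0) (n : ℕ) :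
    ‖T ^ n - L‖ ≤ 2 ^ (n + 2) * (1 / 2) ^ 2 ^ n := by
  refine ContinuousLinearMap.opNorm_le_bound _ (by positivity) fun f => ?_
  have hTn := pow_apply_eq_comp_iterate ι mapsTo_halfSq T hT n
  calc ‖(T ^ n - L) f‖ ≤ 2 * (2 ^ (n + 1) * (1 / 2) ^ 2 ^ n) * ‖f‖ :=
        norm_le_of_apply_eq_comp_sub hnorm (hC1 f) (mapsTo_halfSq.iterate n)
          (fun x _ => (hasDerivAt_halfSq_iterate n x).hasDerivWithinAt)
          (fun x hx => ⟨abs_halfSq_iterate_le hx n, abs_deriv_halfSq_iterate_le hx n⟩)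
          (fun x hx => by
            rw [sub_apply, map_sub, Pi.sub_apply, hTn f x hx, hL f x hx])
    _ = 2 ^ (n + 2) * (1 / 2) ^ 2 ^ n * ‖f‖ := by ring

end C1Realization

theorem stmt_8_general
    {B : Type*} [NormedAddCommGroup B] [NormedSpace ℝ B]
    (ι : B →ₗ[ℝ] (ℝ → ℝ))
    (hnorm : ∀ f : B, ‖f‖ = (⨆ x : Icc (0:ℝ) 1, |ι f (x : ℝ)|) +
        (⨆ x : Icc (0:ℝ) 1, |derivWithin (ι f) (Icc (0:ℝ) 1) (x : ℝ)|))
    (hC1 : ∀ f : B, ContDiffOn ℝ 1 (ι f) (Icc (0:ℝ) 1))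
    (hsurj : ∀ g : ℝ → ℝ, ContDiffOn ℝ 1 g (Icc (0:ℝ) 1) →
      ∃ f : B, ∀ x ∈ Icc (0:ℝ) 1, ι f x = g x)
    (φ : ℝ → ℝ) (hφdef : ∀ x, φ x = x ^ 2 / 2)
    (T L : B →L[ℝ] B)
    (hT : ∀ f : B, ∀ x ∈ Icc (0:ℝ) 1, ι (T f) x = ι f (φ x))
    (hL : ∀ f : B, ∀ x ∈ Icc (0:ℝ) 1, ι (L f) x = ι f 0) :
    MapsTo φ (Icc (0:ℝ) 1) (Icc (0:ℝ) 1) ∧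
    (⋂ n : ℕ, φ^[n] '' Icc (0:ℝ) 1) = {0} ∧
    deriv φ 0 = 0 ∧
    Tendsto (fun n : ℕ => ‖T ^ n - L‖ ^ ((1 : ℝ) / n)) atTop (nhds 0) ∧
    (∀ n : ℕ, ∀ c ∈ Icc (0:ℝ) 1, ∃ f : B, ∃ x ∈ Icc (0:ℝ) 1, ι ((T ^ n) f) x ≠ ι f c) := by
  obtain rfl : φ = halfSq := funext hφdef
  refine ⟨mapsTo_halfSq, iInter_image_halfSq_iterate, deriv_halfSq_zero, ?_, ?_⟩
  · refine tendsto_rpow_one_div_zero_of_eventually_le_pow (fun n => norm_nonneg _) fun ε hε => ?_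
    filter_upwards [eventually_two_pow_mul_half_pow_two_pow_le hε] with n hn
    exact (norm_pow_sub_le hnorm hC1 hT hL n).trans hn
  · intro n c hc
    obtain ⟨f, hf⟩ := hsurj id contDiffOn_id
    simp only [id_eq] at hf
    have hTn := pow_apply_eq_comp_iterate ι mapsTo_halfSq T hT n f
    have h0 : (0 : ℝ) ∈ Icc 0 1 := left_mem_Icc.mpr zero_le_one
    have h1 : (1 : ℝ) ∈ Icc 0 1 := right_mem_Icc.mpr zero_le_one
    refine ⟨f, ?_⟩
    by_cases hc0 : c = 0
    · refine ⟨1, h1, ?_⟩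
      rw [hTn 1 h1, hf _ (mapsTo_halfSq.iterate n h1), hc0, hf 0 h0, halfSq_iterate]
      positivity
    · refine ⟨0, h0, ?_⟩
      rw [hTn 0 h0, hf _ (mapsTo_halfSq.iterate n h0), hf c hc, halfSq_iterate]
      simpa using Ne.symm hc0

/-- Let `φ(x) = x²/2` on `[0,1]`. Then `φ` maps `[0,1]` into itself,
`⋂_n φ_n([0,1]) = {0}`, `φ'(0) = 0`, the composition operator `T f = f∘φ` on `C¹[0,1]`
(modeled by a Banach space `B` with realization `ι` as `C¹` functions carrying the norm
`‖f‖_∞ + ‖f'‖_∞`) satisfies `‖T^n - L‖^(1/n) → 0` where `Lf = f(0)·1`, while no power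
`T^n` is of the form `f ↦ f(c)·1`. -/
theorem stmt_8
    {B : Type*} [NormedAddCommGroup B] [NormedSpace ℝ B] [CompleteSpace B]
    (ι : B →ₗ[ℝ] (ℝ → ℝ))
    (hnorm : ∀ f : B, ‖f‖ = (⨆ x : Icc (0:ℝ) 1, |ι f (x : ℝ)|) +
        (⨆ x : Icc (0:ℝ) 1, |derivWithin (ι f) (Icc (0:ℝ) 1) (x : ℝ)|))
    (hC1 : ∀ f : B, ContDiffOn ℝ 1 (ι f) (Icc (0:ℝ) 1))
    (hsurj : ∀ g : ℝ → ℝ, ContDiffOn ℝ 1 g (Icc (0:ℝ) 1) →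
      ∃ f : B, ∀ x ∈ Icc (0:ℝ) 1, ι f x = g x)
    (φ : ℝ → ℝ) (hφdef : ∀ x, φ x = x ^ 2 / 2)
    (T L : B →L[ℝ] B)
    (hT : ∀ f : B, ∀ x ∈ Icc (0:ℝ) 1, ι (T f) x = ι f (φ x))
    (hL : ∀ f : B, ∀ x ∈ Icc (0:ℝ) 1, ι (L f) x = ι f 0) :
    MapsTo φ (Icc (0:ℝ) 1) (Icc (0:ℝ) 1) ∧
    (⋂ n : ℕ, φ^[n] '' Icc (0:ℝ) 1) = {0} ∧
    deriv φ 0 = 0 ∧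
    Tendsto (fun n : ℕ => ‖T ^ n - L‖ ^ ((1 : ℝ) / n)) atTop (nhds 0) ∧
    (∀ n : ℕ, ∀ c ∈ Icc (0:ℝ) 1, ∃ f : B, ∃ x ∈ Icc (0:ℝ) 1, ι ((T ^ n) f) x ≠ ι f c) :=
  stmt_8_general ι hnorm hC1 hsurj φ hφdef T L hT hL
end

section
/- Let E = ℓ^∞(ℕ × ℕ), 𝒳 its closed unit ball, and φ : 𝒳 → 𝒳 defined by (φ(x))_{j,k} = x_{j,k+1}/(k+1). Let p_{j,k} : 𝒳 → ℂ be the coordinate projections. Then for all n ≥ 1 and all j, p_{j,1} ∘ φ_n = p_{j,n+1}/(n+1)!, and the sequence (p_{j,1}∘φ_n)_{j=1}^∞ ⊆ C(𝒳), scaled by (n+1)!, consists of functions at uniform mutual distance ≥ 1 on 𝒳; hence (p_{j,1}∘φ_n)_j has no uniformly convergent subsequence, so the composition operator f ↦ f∘φ_n on the uniform algebra generated by the p_{j,k} is not compact for any n. -/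
/-!
By induction, `φ^[n] x (j, k) = x (j, k + n) / ((k + 2) ⋯ (k + n + 1))`, so
`p_{j,0} ∘ φ^[n] = p_{j,n} / (n + 1)!`. The point of the unit ball equal to `1` on row `j` and
to `-1` elsewhere puts `p_{j,0} ∘ φ^[n]` and `p_{j',0} ∘ φ^[n]` at distance `2 / (n + 1)!`, so any
subsequence of these functions is uniformly separated, hence not uniformly Cauchy.
-/

open Filter

theorem not_tendstoUniformlyOn_of_separated {α β : Type*} [PseudoMetricSpace β]
    {F : ℕ → α → β} {s : Set α} {ε : ℝ} (hε : 0 < ε)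
    (hsep : ∀ i i', i ≠ i' → ∃ x ∈ s, ε ≤ dist (F i x) (F i' x)) (g : α → β) :
    ¬ TendstoUniformlyOn F g atTop s := by
  intro hF
  obtain ⟨N, hN⟩ := Metric.uniformCauchySeqOn_iff.1 hF.uniformCauchySeqOn ε hε
  obtain ⟨x, hx, hle⟩ := hsep N (N + 1) N.succ_ne_self.symm
  exact (hN N le_rfl (N + 1) N.le_succ x hx).not_ge hle

section WeightedShift

variable {ι 𝕜 : Type*} {φ : (ι × ℕ → 𝕜) → (ι × ℕ → 𝕜)}

theorem iterate_weightedShift_apply [Field 𝕜] (hφ : ∀ x j k, φ x (j, k) = x (j, k + 1) / (k + 2))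
    (n : ℕ) (x : ι × ℕ → 𝕜) (j : ι) (k : ℕ) :
    φ^[n] x (j, k) = x (j, k + n) / (k + 2).ascFactorial n := by
  induction n generalizing x with
  | zero => simp
  | succ n ih =>
    rw [Function.iterate_succ_apply, ih, hφ, Nat.ascFactorial_succ, div_div, ← add_assoc]
    push_cast
    ring_nf

theorem iterate_weightedShift_apply_zero [Field 𝕜]
    (hφ : ∀ x j k, φ x (j, k) = x (j, k + 1) / (k + 2)) (n : ℕ) (x : ι × ℕ → 𝕜) (j : ι) :
    φ^[n] x (j, 0) = x (j, n) / (n + 1).factorial := by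
  have h : Nat.ascFactorial 2 n = (n + 1).factorial := by
    simpa [add_comm] using Nat.factorial_mul_ascFactorial 1 n
  rw [iterate_weightedShift_apply hφ, zero_add, zero_add, h]

theorem norm_iterate_weightedShift_sub_le [RCLike 𝕜]
    (hφ : ∀ x j k, φ x (j, k) = x (j, k + 1) / (k + 2)) (n : ℕ) {x : ι × ℕ → 𝕜}
    (hx : ∀ p, ‖x p‖ ≤ 1) (j j' : ι) :
    ‖φ^[n] x (j, 0) - φ^[n] x (j', 0)‖ ≤ 2 / (n + 1).factorial := by
  rw [iterate_weightedShift_apply_zero hφ, iterate_weightedShift_apply_zero hφ, ← sub_div,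
    norm_div, RCLike.norm_natCast]
  gcongr
  calc ‖x (j, n) - x (j', n)‖ ≤ ‖x (j, n)‖ + ‖x (j', n)‖ := norm_sub_le _ _
    _ ≤ 1 + 1 := add_le_add (hx _) (hx _)
    _ = 2 := one_add_one_eq_two

theorem exists_norm_iterate_weightedShift_sub_eq [RCLike 𝕜]
    (hφ : ∀ x j k, φ x (j, k) = x (j, k + 1) / (k + 2)) (n : ℕ) {j j' : ι} (hj : j ≠ j') :
    ∃ x : ι × ℕ → 𝕜, (∀ p, ‖x p‖ ≤ 1) ∧
      ‖φ^[n] x (j, 0) - φ^[n] x (j', 0)‖ = 2 / (n + 1).factorial := by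
  classical
  refine ⟨fun p => if p.1 = j then 1 else -1, fun p => by dsimp only; split_ifs <;> simp, ?_⟩
  rw [iterate_weightedShift_apply_zero hφ, iterate_weightedShift_apply_zero hφ, ← sub_div,
    norm_div, RCLike.norm_natCast]
  norm_num [hj.symm]

end WeightedShift

/-- For the weighted shift `φ` on the unit ball of `ℓ^∞(ℕ × ℕ)` (indices from `0`, weight
`k+2` on coordinate `k`): `p_{j,0}∘φ_n = p_{j,n}/(n+1)!`; for `j ≠ j'` the functions
`p_{j,0}∘φ_n` and `p_{j',0}∘φ_n` are at uniform distance exactly `2/(n+1)!` on the ball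
(so after scaling by `(n+1)!` they are at mutual distance `2 ≥ 1`); hence no subsequence of
`(p_{j,0}∘φ_n)_j` converges uniformly on the ball, so the composition operator `f ↦ f∘φ_n`
is not compact for any `n ≥ 1`. -/
theorem stmt_13 (φ : (ℕ × ℕ → ℂ) → (ℕ × ℕ → ℂ))
    (hφ : ∀ (x : ℕ × ℕ → ℂ) (j k : ℕ), φ x (j, k) = x (j, k + 1) / (k + 2)) :
    (∀ n : ℕ, 1 ≤ n → ∀ (x : ℕ × ℕ → ℂ) (j : ℕ),
      φ^[n] x (j, 0) = x (j, n) / (Nat.factorial (n + 1) : ℂ)) ∧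
    (∀ n : ℕ, 1 ≤ n → ∀ j j' : ℕ, j ≠ j' →
      sSup {r : ℝ | ∃ x : ℕ × ℕ → ℂ, (∀ p, ‖x p‖ ≤ 1) ∧
          r = ‖φ^[n] x (j, 0) - φ^[n] x (j', 0)‖} = 2 / (Nat.factorial (n + 1) : ℝ)) ∧
    (∀ n : ℕ, 1 ≤ n → ∀ s : ℕ → ℕ, StrictMono s → ∀ g : (ℕ × ℕ → ℂ) → ℂ,
      ¬ TendstoUniformlyOn (fun j (x : ℕ × ℕ → ℂ) => φ^[n] x (s j, 0)) g atTop
          {x : ℕ × ℕ → ℂ | ∀ p, ‖x p‖ ≤ 1}) := by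
  refine ⟨fun n _ => iterate_weightedShift_apply_zero hφ n, fun n _ j j' hj => ?_,
    fun n _ s hs g => not_tendstoUniformlyOn_of_separated
      (ε := 2 / (n + 1).factorial) (by positivity) (fun i i' hi => ?_) g⟩
  · refine IsGreatest.csSup_eq ⟨?_, ?_⟩
    · obtain ⟨x, hx, hnorm⟩ := exists_norm_iterate_weightedShift_sub_eq hφ n hj
      exact ⟨x, hx, hnorm.symm⟩
    · rintro _ ⟨x, hx, rfl⟩
      exact norm_iterate_weightedShift_sub_le hφ n hx j j'
  · obtain ⟨x, hx, hnorm⟩ := exists_norm_iterate_weightedShift_sub_eq hφ n (hs.injective.ne hi)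
    exact ⟨x, hx, (dist_eq_norm _ _).trans hnorm |>.ge⟩
end
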